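/- For any m ≥ 1, almost surely the following holds for every α̊ ∈ A_n: V_n(α̊, β) = 0 for every β ∈ (ℝ^d)^m; consequently, for every β̊ ∈ (ℝ^d)^m, the pair (α̊, β̊) is a Nash equilibrium of the convolutional-discriminator game, i.e. V_n(α̊, β) ≤ V_n(α̊, β̊) ≤ V_n(α, β̊) for all α ∈ ℝ^d and all β ∈ (ℝ^d)^m. -/

import Mathlib

open MeasureTheory ProbabilityTheory Filter
open scoped Real

noncomputable section

/-- Discrete Fourier transform of `x : ℝ^d` at frequency `ω = 2πk/d`. -/
def dft (d : ℕ) (x : Fin d → ℝ) (k : Fin d) : ℂ :=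
  ∑ u : Fin d, (x u : ℂ) *
    Complex.exp (-(2 * Real.pi * Complex.I * ((k : ℕ) : ℂ) * ((u : ℕ) : ℂ)) / (d : ℂ))

/-- Circular convolution on `ℝ^d` (indices mod `d`). -/
def cconv (d : ℕ) (a z : Fin d → ℝ) : Fin d → ℝ := fun u => ∑ v : Fin d, a v * z (u - v)

/-- Covariance matrix of `a ⋆ Z`, `Z ~ N(0, I_d)` white noise. -/
def covMat (d : ℕ) (a : Fin d → ℝ) : Matrix (Fin d) (Fin d) ℝ :=
  Matrix.of fun u u' => ∑ v : Fin d, a (u - v) * a (u' - v)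

/-- Spectral (operator) norm of a matrix. -/
def specNorm (d : ℕ) (M : Matrix (Fin d) (Fin d) ℝ) : ℝ :=
  ‖Matrix.toEuclideanCLM (𝕜 := ℝ) M‖

/-- Euclidean norm. -/
def l2norm (d : ℕ) (x : Fin d → ℝ) : ℝ := Real.sqrt (∑ u : Fin d, x u ^ 2)

/-- Empirical covariance matrix of the first `n` samples. -/
def empCov (d n : ℕ) (y : ℕ → Fin d → ℝ) : Matrix (Fin d) (Fin d) ℝ :=
  (n : ℝ)⁻¹ • ∑ i ∈ Finset.range n, Matrix.vecMulVec (y i) (y i)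

/-- Empirical mean of `|ŷ(ω)|²` over the first `n` samples. -/
def empPS (d n : ℕ) (y : ℕ → Fin d → ℝ) (k : Fin d) : ℝ :=
  (n : ℝ)⁻¹ * ∑ i ∈ Finset.range n, Complex.normSq (dft d (y i) k)

/-- The consistent-generator set `A_n` (for a fixed sample `(z̄_i, z_i)_{i<n}`). -/
def An (d n : ℕ) (abar : Fin d → ℝ) (zbar z : ℕ → Fin d → ℝ) : Set (Fin d → ℝ) :=
  {a | ∀ k : Fin d, Complex.normSq (dft d a k) =
      empPS d n (fun i => cconv d abar (zbar i)) k / empPS d n z k}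


/-- The combined family of all Gaussian coordinates of the two sample sequences
`z̄` (at `false`) and `z` (at `true`). -/
def coords {Ω : Type*} (d : ℕ) (zbar z : ℕ → Ω → Fin d → ℝ) :
    Bool × ℕ × Fin d → Ω → ℝ :=
  fun p ω => if p.1 then z p.2.1 ω p.2.2 else zbar p.2.1 ω p.2.2

/-- `(z̄_i)` and `(z_i)` are mutually independent i.i.d. `N(0, I_d)` random vectors:
all the real coordinates are independent standard Gaussians. -/
def IsWhiteNoisePair {Ω : Type*} [MeasureSpace Ω] (d : ℕ)
    (zbar z : ℕ → Ω → Fin d → ℝ) : Prop :=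
  (∀ i, Measurable (zbar i)) ∧ (∀ i, Measurable (z i)) ∧
    iIndepFun (coords d zbar z) ℙ ∧
    ∀ p : Bool × ℕ × Fin d, Measure.map (coords d zbar z p) ℙ = gaussianReal 0 1

/-- `r_{n,ℓ}(α, β) = E_n(‖X ⋆ β_ℓ‖²) − E_n(‖(α ⋆ Z) ⋆ β_ℓ‖²)` for the convolutional
discriminator, given samples `x_i = xs i`, `z_i = zs i`. -/
def rConv (d n : ℕ) (xs zs : ℕ → Fin d → ℝ) (a : Fin d → ℝ) (bl : Fin d → ℝ) : ℝ :=
  (n : ℝ)⁻¹ * ∑ i ∈ Finset.range n, ∑ u : Fin d, cconv d (xs i) bl u ^ 2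
    - (n : ℝ)⁻¹ * ∑ i ∈ Finset.range n, ∑ u : Fin d, cconv d (cconv d a (zs i)) bl u ^ 2

/-- The convolutional-discriminator objective `V_n(α, β) = ∑_{ℓ<m} r_{n,ℓ}(α, β)²`. -/
def VConv (d n m : ℕ) (xs zs : ℕ → Fin d → ℝ) (a : Fin d → ℝ)
    (b : Fin m → Fin d → ℝ) : ℝ :=
  ∑ ℓ : Fin m, rConv d n xs zs a (b ℓ) ^ 2

/-! By Parseval's identity and the convolution theorem,
`d · r_{n,ℓ}(α, β) = Σ_ω |β̂_ℓ(ω)|² (E_n|X̂(ω)|² − |α̂(ω)|² E_n|Ẑ(ω)|²)`.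
Almost surely every `E_n|Ẑ(ω)|²` is positive: the real part of `ẑ₀(ω)` is a linear combination
of independent Gaussian coordinates with coefficient `1` at `u = 0`, and a variable with atomless
law independent of the others hits any function of them with probability zero.
Then every `α ∈ A_n` makes each bracket vanish, so `V_n(α, ·) ≡ 0`, and `V_n ≥ 0` gives the
saddle-point inequalities. -/

lemma IsPrimitiveRoot.sum_pow_mul_inv_pow {K : Type*} [Field K] {ζ : K} {d : ℕ}
    (hζ : IsPrimitiveRoot ζ d) {u v : ℕ} (hu : u < d) (hv : v < d) :
    ∑ k ∈ Finset.range d, ζ ^ (k * u) * (ζ ^ (k * v))⁻¹ = if u = v then (d : K) else 0 := by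
  have hζ0 : ζ ≠ 0 := hζ.ne_zero (by omega)
  set w := ζ ^ u * (ζ ^ v)⁻¹
  have hterm : ∀ k, ζ ^ (k * u) * (ζ ^ (k * v))⁻¹ = w ^ k := fun k => by
    rw [mul_pow, inv_pow, ← pow_mul, ← pow_mul, mul_comm u, mul_comm v]
  simp only [hterm]
  split_ifs with huv
  · simp [w, huv, hζ0]
  · have hw : w ≠ 1 := fun h =>
      huv (hζ.pow_inj hu hv (by rwa [mul_inv_eq_one₀ (pow_ne_zero _ hζ0)] at h))
    have hwd : w ^ d = 1 := by
      rw [mul_pow, inv_pow, ← pow_mul, ← pow_mul, mul_comm u, mul_comm v, pow_mul, pow_mul,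
        hζ.pow_eq_one, one_pow, one_pow, inv_one, one_mul]
    rw [geom_sum_eq hw, hwd, sub_self, zero_div]

def dftRoot (d : ℕ) : ℂ := Complex.exp (-(2 * π * Complex.I) / d)

lemma isPrimitiveRoot_dftRoot {d : ℕ} (hd : d ≠ 0) : IsPrimitiveRoot (dftRoot d) d := by
  rw [dftRoot, neg_div, Complex.exp_neg]
  exact (Complex.isPrimitiveRoot_exp d hd).inv

lemma conj_dftRoot (d : ℕ) : (starRingEnd ℂ) (dftRoot d) = (dftRoot d)⁻¹ := by
  rw [dftRoot, ← Complex.exp_conj, ← Complex.exp_neg, map_div₀, map_neg]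
  simp only [Complex.conj_I, map_mul, map_ofNat, Complex.conj_ofReal, Complex.conj_natCast]
  ring_nf

lemma dft_eq_sum_pow (d : ℕ) (x : Fin d → ℝ) (k : Fin d) :
    dft d x k = ∑ u : Fin d, (x u : ℂ) * dftRoot d ^ ((k : ℕ) * u) := by
  refine Finset.sum_congr rfl fun u _ => ?_
  rw [dftRoot, ← Complex.exp_nat_mul]
  push_cast
  ring_nf

lemma dftRoot_pow_mul_val_add {d : ℕ} (k t v : Fin d) :
    dftRoot d ^ ((k : ℕ) * (t + v : Fin d)) =
      dftRoot d ^ ((k : ℕ) * t) * dftRoot d ^ ((k : ℕ) * v) := by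
  have hζ := isPrimitiveRoot_dftRoot k.pos.ne'
  rw [← pow_add, ← mul_add, (hζ.isOfFinOrder k.pos.ne').pow_eq_pow_iff_modEq, ← hζ.eq_orderOf,
    Fin.val_add]
  exact (Nat.mod_modEq _ _).mul_left _

lemma dft_cconv (d : ℕ) (a z : Fin d → ℝ) (k : Fin d) :
    dft d (cconv d a z) k = dft d a k * dft d z k := by
  have : NeZero d := ⟨k.pos.ne'⟩
  simp only [dft_eq_sum_pow, cconv, Finset.sum_mul_sum]
  push_cast
  simp only [Finset.sum_mul]
  rw [Finset.sum_comm]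
  refine Finset.sum_congr rfl fun v _ => ?_
  symm
  refine Fintype.sum_equiv (Equiv.addRight v) _ _ fun t => ?_
  rw [Equiv.coe_addRight, add_sub_cancel_right, dftRoot_pow_mul_val_add]
  ring

lemma sum_normSq_dft (d : ℕ) (x : Fin d → ℝ) :
    ∑ k : Fin d, Complex.normSq (dft d x k) = d * ∑ u : Fin d, x u ^ 2 := by
  rcases eq_or_ne d 0 with rfl | hd
  · simp
  have hζ := isPrimitiveRoot_dftRoot hd
  have hconj : ∀ k : Fin d, (starRingEnd ℂ) (dft d x k) =
      ∑ v : Fin d, (x v : ℂ) * (dftRoot d ^ ((k : ℕ) * v))⁻¹ := fun k => by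
    simp only [dft_eq_sum_pow, map_sum, map_mul, Complex.conj_ofReal, map_pow, conj_dftRoot,
      inv_pow]
  suffices h : ∑ k : Fin d, (Complex.normSq (dft d x k) : ℂ) = d * ∑ u : Fin d, (x u : ℂ) ^ 2 by
    exact_mod_cast h
  calc ∑ k : Fin d, (Complex.normSq (dft d x k) : ℂ)
      = ∑ k : Fin d, dft d x k * (starRingEnd ℂ) (dft d x k) := by
        simp only [Complex.mul_conj]
    _ = ∑ u : Fin d, ∑ v : Fin d, (x u : ℂ) * x v *
          ∑ k : Fin d, dftRoot d ^ ((k : ℕ) * u) * (dftRoot d ^ ((k : ℕ) * v))⁻¹ := by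
        simp_rw [hconj, dft_eq_sum_pow, Finset.sum_mul_sum, Finset.mul_sum]
        rw [Finset.sum_comm]
        refine Finset.sum_congr rfl fun u _ => ?_
        rw [Finset.sum_comm]
        exact Finset.sum_congr rfl fun v _ => Finset.sum_congr rfl fun k _ => by ring
    _ = d * ∑ u : Fin d, (x u : ℂ) ^ 2 := by
        rw [Finset.mul_sum]
        refine Finset.sum_congr rfl fun u _ => ?_
        have horth : ∀ v : Fin d,
            ∑ k : Fin d, dftRoot d ^ ((k : ℕ) * u) * (dftRoot d ^ ((k : ℕ) * v))⁻¹ =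
              if u = v then (d : ℂ) else 0 := fun v => by
          rw [Fin.sum_univ_eq_sum_range (fun k => dftRoot d ^ (k * u) * (dftRoot d ^ (k * v))⁻¹),
            hζ.sum_pow_mul_inv_pow u.is_lt v.is_lt]
          simp only [Fin.val_inj]
        simp only [horth, mul_ite, mul_zero, Finset.sum_ite_eq, Finset.mem_univ, if_true]
        ring

lemma sum_cconv_sq (d : ℕ) (x b : Fin d → ℝ) :
    d * ∑ u : Fin d, cconv d x b u ^ 2 =
      ∑ k : Fin d, Complex.normSq (dft d x k) * Complex.normSq (dft d b k) := by
  simp only [← sum_normSq_dft, dft_cconv, Complex.normSq_mul]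

lemma rConv_eq_sum_dft (d n : ℕ) (xs zs : ℕ → Fin d → ℝ) (a bl : Fin d → ℝ) :
    d * rConv d n xs zs a bl = ∑ k : Fin d, Complex.normSq (dft d bl k) *
      (empPS d n xs k - Complex.normSq (dft d a k) * empPS d n zs k) := by
  calc (d : ℝ) * rConv d n xs zs a bl
      = (n : ℝ)⁻¹ * ∑ i ∈ Finset.range n, d * ∑ u : Fin d, cconv d (xs i) bl u ^ 2
        - (n : ℝ)⁻¹ * ∑ i ∈ Finset.range n,
            d * ∑ u : Fin d, cconv d (cconv d a (zs i)) bl u ^ 2 := by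
        simp only [rConv, ← Finset.mul_sum]
        ring
    _ = _ := by
        simp only [sum_cconv_sq, dft_cconv, Complex.normSq_mul]
        simp only [empPS, Finset.mul_sum, mul_sub, Finset.sum_sub_distrib]
        rw [Finset.sum_comm, Finset.sum_comm (s := Finset.range n)]
        congr 1 <;> exact Finset.sum_congr rfl fun k _ => Finset.sum_congr rfl fun i _ => by ring

lemma rConv_eq_zero {d n : ℕ} {xs zs : ℕ → Fin d → ℝ} {a : Fin d → ℝ}
    (h : ∀ k, Complex.normSq (dft d a k) * empPS d n zs k = empPS d n xs k) (bl : Fin d → ℝ) :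
    rConv d n xs zs a bl = 0 := by
  rcases eq_or_ne d 0 with rfl | hd
  · simp [rConv]
  have hsum := rConv_eq_sum_dft d n xs zs a bl
  simp only [h, sub_self, mul_zero, Finset.sum_const_zero] at hsum
  exact (mul_eq_zero.mp hsum).resolve_left (Nat.cast_ne_zero.mpr hd)

lemma VConv_nonneg (d n m : ℕ) (xs zs : ℕ → Fin d → ℝ) (a : Fin d → ℝ) (b : Fin m → Fin d → ℝ) :
    0 ≤ VConv d n m xs zs a b :=
  Finset.sum_nonneg fun _ _ => sq_nonneg _

lemma VConv_eq_zero {d n m : ℕ} {xs zs : ℕ → Fin d → ℝ} {a : Fin d → ℝ}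
    (h : ∀ bl, rConv d n xs zs a bl = 0) (b : Fin m → Fin d → ℝ) :
    VConv d n m xs zs a b = 0 :=
  Finset.sum_eq_zero fun ℓ _ => by rw [h, sq, zero_mul]

lemma empPS_pos {d n : ℕ} {y : ℕ → Fin d → ℝ} {k : Fin d} (hn : n ≠ 0) (hy : dft d (y 0) k ≠ 0) :
    0 < empPS d n y k := by
  refine mul_pos (by positivity) (lt_of_lt_of_le (Complex.normSq_pos.mpr hy) ?_)
  exact Finset.single_le_sum (f := fun i => Complex.normSq (dft d (y i) k))
    (fun i _ => Complex.normSq_nonneg _) (Finset.mem_range.mpr (Nat.pos_of_ne_zero hn))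

lemma normSq_dft_mul_empPS_of_mem_An {d n : ℕ} {abar : Fin d → ℝ} {zbar z : ℕ → Fin d → ℝ}
    {a : Fin d → ℝ} (ha : a ∈ An d n abar zbar z) (hz : ∀ k, dft d (z 0) k ≠ 0) (k : Fin d) :
    Complex.normSq (dft d a k) * empPS d n z k = empPS d n (fun i => cconv d abar (zbar i)) k := by
  rcases eq_or_ne n 0 with rfl | hn
  · simp [empPS] -- with no samples both spectra are the junk value `0⁻¹ * 0 = 0`
  rw [ha k, div_mul_cancel₀ _ (empPS_pos hn (hz k)).ne']

namespace ProbabilityTheory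

lemma IndepFun.measure_setOf_eq_comp_eq_zero {Ω α β : Type*} [MeasurableSpace Ω]
    [MeasurableSpace α] [MeasurableSpace β] [MeasurableEq β] {μ : Measure Ω} [IsFiniteMeasure μ]
    {X : Ω → α} {Y : Ω → β} (hXY : IndepFun X Y μ) (hX : Measurable X) (hY : Measurable Y)
    [NullSingletonClass (μ.map Y)] {f : α → β} (hf : Measurable f) :
    μ {ω | Y ω = f (X ω)} = 0 := by
  have hS : MeasurableSet {p : α × β | p.2 = f p.1} :=
    measurableSet_eq_fun measurable_snd (hf.comp measurable_fst)
  have hsection : ∀ x, Prod.mk x ⁻¹' {p : α × β | p.2 = f p.1} = {f x} := fun _ => rfl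
  rw [show {ω | Y ω = f (X ω)} = (fun ω => (X ω, Y ω)) ⁻¹' {p : α × β | p.2 = f p.1} from rfl,
    ← Measure.map_apply (hX.prodMk hY) hS,
    (indepFun_iff_map_prod_eq_prod_map_map hX.aemeasurable hY.aemeasurable).mp hXY,
    Measure.prod_apply hS]
  simp only [hsection, measure_singleton, lintegral_zero]

lemma iIndepFun.ae_sum_mul_ne_zero {Ω ι : Type*} [MeasurableSpace Ω] [DecidableEq ι]
    {μ : Measure Ω} {F : ι → Ω → ℝ} (hF : iIndepFun F μ) (hmeas : ∀ i, Measurable (F i))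
    (hatom : ∀ i, NullSingletonClass (μ.map (F i))) {s : Finset ι} {c : ι → ℝ} {j : ι}
    (hj : j ∈ s) (hc : c j ≠ 0) :
    ∀ᵐ ω ∂μ, ∑ i ∈ s, c i * F i ω ≠ 0 := by
  have := hF.isProbabilityMeasure
  have := hatom j
  let G : ι → Ω → ℝ := fun i ω => c i * F i ω
  let X : Ω → ℝ := fun ω => ∑ i ∈ s.erase j, c i * F i ω
  have hGmeas : ∀ i, Measurable (G i) := fun i => (hmeas i).const_mul (c i)
  have hXmeas : Measurable X := Finset.measurable_sum _ fun i _ => hGmeas i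
  have hXF : IndepFun X (F j) μ := by
    have hG : iIndepFun G μ := hF.comp (fun i x => c i * x) fun i => measurable_const_mul (c i)
    have h := (hG.indepFun_finsetSum_of_notMem hGmeas (Finset.notMem_erase j s)).comp
      measurable_id (measurable_div_const (c j))
    have hX : id ∘ ∑ i ∈ s.erase j, G i = X := funext fun ω => by simp [X, G, Finset.sum_apply]
    have hFj : (fun x => x / c j) ∘ G j = F j := funext fun ω => by simp [G, hc]
    rwa [hX, hFj] at h
  refine measure_mono_null (fun ω hω => ?_)
    (hXF.measure_setOf_eq_comp_eq_zero hXmeas (hmeas j) (f := fun x => -x / c j) (by fun_prop))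
  have hsum : c j * F j ω + X ω = 0 := by
    rw [Finset.add_sum_erase s (fun i => c i * F i ω) hj]
    simpa using hω
  rw [Set.mem_ofPred_eq, eq_div_iff hc]
  linarith

end ProbabilityTheory

open MeasureTheory ProbabilityTheory

lemma dft_re (d : ℕ) (x : Fin d → ℝ) (k : Fin d) :
    (dft d x k).re = ∑ u : Fin d,
      (Complex.exp (-(2 * π * Complex.I * (k : ℕ) * (u : ℕ)) / d)).re * x u := by
  simp only [dft, Complex.re_sum, Complex.re_ofReal_mul, mul_comm]

lemma IsWhiteNoisePair.ae_dft_ne_zero {Ω : Type*} [MeasureSpace Ω] {d : ℕ}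
    {zbar z : ℕ → Ω → Fin d → ℝ} (hwn : IsWhiteNoisePair d zbar z) (i : ℕ) :
    ∀ᵐ ω ∂ℙ, ∀ k, dft d (z i ω) k ≠ 0 := by
  obtain ⟨-, hmeas, hindep, hlaw⟩ := hwn
  rw [ae_all_iff]
  intro k
  have : NeZero d := ⟨k.pos.ne'⟩
  have hF : iIndepFun (fun u : Fin d => fun ω => z i ω u) ℙ :=
    hindep.precomp (g := fun u => (true, i, u)) fun u v h => by simpa using h
  have hatom (u : Fin d) : NullSingletonClass (Measure.map (fun ω => z i ω u) ℙ) := by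
    rw [show (fun ω => z i ω u) = coords d zbar z (true, i, u) from rfl, hlaw]
    exact nullSingletonClass_gaussianReal one_ne_zero
  filter_upwards [hF.ae_sum_mul_ne_zero (fun u => (measurable_pi_apply u).comp (hmeas i)) hatom
    (Finset.mem_univ 0)
    (c := fun u => (Complex.exp (-(2 * π * Complex.I * (k : ℕ) * (u : ℕ)) / d)).re)
    (by simp)] with ω hω hdft
  rw [← dft_re, hdft, Complex.zero_re] at hω
  exact hω rfl

theorem stmt13_general {d n m : ℕ}
    {Ω : Type*} [MeasureSpace Ω]
    (abar : Fin d → ℝ) (zbar z : ℕ → Ω → Fin d → ℝ) (hwn : IsWhiteNoisePair d zbar z) :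
    ∀ᵐ ω ∂ℙ, ∀ a₀ ∈ An d n abar (fun i => zbar i ω) (fun i => z i ω),
      (∀ b : Fin m → Fin d → ℝ,
        VConv d n m (fun i => cconv d abar (zbar i ω)) (fun i => z i ω) a₀ b = 0) ∧
      ∀ b₀ : Fin m → Fin d → ℝ,
        (∀ b : Fin m → Fin d → ℝ,
          VConv d n m (fun i => cconv d abar (zbar i ω)) (fun i => z i ω) a₀ b ≤
            VConv d n m (fun i => cconv d abar (zbar i ω)) (fun i => z i ω) a₀ b₀) ∧
        (∀ a : Fin d → ℝ,
          VConv d n m (fun i => cconv d abar (zbar i ω)) (fun i => z i ω) a₀ b₀ ≤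
            VConv d n m (fun i => cconv d abar (zbar i ω)) (fun i => z i ω) a b₀) := by
  filter_upwards [hwn.ae_dft_ne_zero 0] with ω hω a₀ ha₀
  have hV := VConv_eq_zero (m := m) (rConv_eq_zero (normSq_dft_mul_empPS_of_mem_An ha₀ hω))
  exact ⟨hV, fun b₀ => ⟨fun b => (hV b).trans_le (hV b₀).ge,
    fun a => (hV b₀).trans_le (VConv_nonneg _ _ _ _ _ a b₀)⟩⟩

theorem stmt13 {d n m : ℕ} (hd : 1 ≤ d) (hn : 1 ≤ n) (hm : 1 ≤ m)
    {Ω : Type*} [MeasureSpace Ω] [IsProbabilityMeasure (ℙ : Measure Ω)]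
    (abar : Fin d → ℝ) (zbar z : ℕ → Ω → Fin d → ℝ) (hwn : IsWhiteNoisePair d zbar z) :
    ∀ᵐ ω ∂ℙ, ∀ a₀ ∈ An d n abar (fun i => zbar i ω) (fun i => z i ω),
      (∀ b : Fin m → Fin d → ℝ,
        VConv d n m (fun i => cconv d abar (zbar i ω)) (fun i => z i ω) a₀ b = 0) ∧
      ∀ b₀ : Fin m → Fin d → ℝ,
        (∀ b : Fin m → Fin d → ℝ,
          VConv d n m (fun i => cconv d abar (zbar i ω)) (fun i => z i ω) a₀ b ≤
            VConv d n m (fun i => cconv d abar (zbar i ω)) (fun i => z i ω) a₀ b₀) ∧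
        (∀ a : Fin d → ℝ,
          VConv d n m (fun i => cconv d abar (zbar i ω)) (fun i => z i ω) a₀ b₀ ≤
            VConv d n m (fun i => cconv d abar (zbar i ω)) (fun i => z i ω) a b₀) :=
  stmt13_general abar zbar z hwn
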